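/- arXiv:2105.05234 — 2 statements merged into one kernel-verified Lean document; each statement's English description precedes it below -/
import Mathlib

section
/- Let G be a connected graph and P a vertex partition of G all of whose blocks induce connected subgraphs. Then the bridge-block decomposition of G is finer than P if and only if the reduced graph G_P is a tree (i.e., it is connected and acyclic, where parallel edges between the same pair of blocks count as a cycle). -/
/-!
Call an edge of `G` crossing when its ends lie in different blocks, and let `H` be the simple
graph on the blocks with an edge for each crossing edge. The bridge-blocks refine the partition
iff every crossing edge is a bridge. Since `G` is connected, so is `H`, and the crossing edges map
onto the edges of `H`; hence there are at least `|P| - 1` of them, and if a crossing edge is not a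
bridge, removing it keeps `G` connected, so there are more than `|P| - 1`. Conversely, as blocks
are connected, a walk in `H` avoiding the image of a crossing bridge `e` lifts to a walk in
`G - e`. So every edge of `H` is a bridge, making `H` a tree, and distinct crossing edges have
distinct images in `H`: there are exactly `|E(H)| = |P| - 1` of them.
-/

open Function

namespace SimpleGraph

variable {V ι : Type*} (G : SimpleGraph V) (π : V → ι)

/-- The simple graph underlying the reduced multigraph `G_P`, for `P` the fibers of `π`. -/
def quotientGraph : SimpleGraph ι :=
  fromRel fun a c => ∃ u v, G.Adj u v ∧ π u = a ∧ π v = c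

def crossEdgeSet : Set (Sym2 V) :=
  {e ∈ G.edgeSet | ¬ (Sym2.map π e).IsDiag}

variable {G π}

lemma quotientGraph_adj {a c : ι} :
    (G.quotientGraph π).Adj a c ↔ a ≠ c ∧ ∃ u v, G.Adj u v ∧ π u = a ∧ π v = c := by
  rw [quotientGraph, fromRel_adj]
  refine and_congr_right fun _ => or_iff_left_of_imp ?_
  rintro ⟨u, v, huv, rfl, rfl⟩
  exact ⟨v, u, huv.symm, rfl, rfl⟩

lemma image_map_crossEdgeSet :
    Sym2.map π '' G.crossEdgeSet π = (G.quotientGraph π).edgeSet := by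
  ext e
  induction e using Sym2.ind with | _ a c =>
  constructor
  · rintro ⟨e, ⟨he, hd⟩, hea⟩
    induction e using Sym2.ind with | _ u v =>
    rw [Sym2.map_mk] at hd hea
    rw [← hea, mem_edgeSet]
    exact quotientGraph_adj.2 ⟨by simpa using hd, u, v, he, rfl, rfl⟩
  · intro h
    obtain ⟨hac, u, v, huv, rfl, rfl⟩ := quotientGraph_adj.1 h
    exact ⟨s(u, v), ⟨huv, by simpa using hac⟩, rfl⟩

lemma map_mem_edgeSet_quotientGraph {e : Sym2 V} (he : e ∈ G.crossEdgeSet π) :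
    Sym2.map π e ∈ (G.quotientGraph π).edgeSet :=
  image_map_crossEdgeSet ▸ Set.mem_image_of_mem _ he

lemma crossEdgeSet_deleteEdges (s : Set (Sym2 V)) :
    (G.deleteEdges s).crossEdgeSet π = G.crossEdgeSet π \ s := by
  ext e
  simp only [crossEdgeSet, edgeSet_deleteEdges, Set.mem_sdiff, Set.mem_ofPred_eq]
  tauto

lemma Reachable.quotientGraph {u v : V} (h : G.Reachable u v) :
    (G.quotientGraph π).Reachable (π u) (π v) := by
  obtain ⟨p⟩ := h
  induction p with
  | nil => rfl
  | @cons x y _ hxy _ ih =>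
    refine Reachable.trans ?_ ih
    by_cases hπ : π x = π y
    · rw [hπ]
    · exact (quotientGraph_adj.2 ⟨hπ, x, y, hxy, rfl, rfl⟩).reachable

lemma Connected.quotientGraph (hG : G.Connected) (hπ : Surjective π) :
    (G.quotientGraph π).Connected := by
  refine (connected_iff_exists_forall_reachable _).2 ⟨π hG.nonempty.some, fun a => ?_⟩
  obtain ⟨v, rfl⟩ := hπ a
  exact (hG.preconnected _ v).quotientGraph

lemma Reachable.of_quotientGraph (hfib : ∀ u v, π u = π v → G.Reachable u v) {u v : V}
    (h : (G.quotientGraph π).Reachable (π u) (π v)) : G.Reachable u v := by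
  obtain ⟨p⟩ := h
  suffices ∀ {a b} (_ : (G.quotientGraph π).Walk a b) u v, π u = a → π v = b →
      G.Reachable u v from this p u v rfl rfl
  intro a b p
  induction p with
  | nil => exact fun u v hu hv => hfib u v (hu.trans hv.symm)
  | cons hac _ ih =>
    intro u v hu hv
    obtain ⟨-, x, y, hxy, rfl, rfl⟩ := quotientGraph_adj.1 hac
    exact (hfib u x hu).trans (hxy.reachable.trans (ih y v rfl hv))

lemma card_sub_one_le_ncard_crossEdgeSet [Finite V] (hG : G.Connected) (hπ : Surjective π) :
    Nat.card ι - 1 ≤ (G.crossEdgeSet π).ncard := by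
  have hconn := (hG.quotientGraph hπ).card_vert_le_card_edgeSet_add_one
  have himage := Set.ncard_image_le (f := Sym2.map π) (G.crossEdgeSet π).toFinite
  rw [image_map_crossEdgeSet, ← Nat.card_coe_set_eq] at himage
  omega

lemma reachable_deleteEdges_of_map_eq (hblocks : ∀ a, (G.induce (π ⁻¹' {a})).Connected)
    {e : Sym2 V} (he : ¬ (Sym2.map π e).IsDiag) {u v : V} (h : π u = π v) :
    (G.deleteEdges {e}).Reachable u v := by
  have hfiber : ∀ x y : ↥(π ⁻¹' {π u}), s(x.1, y.1) ≠ e := by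
    rintro x y rfl
    have hx : π x = π u := x.2
    have hy : π y = π u := y.2
    exact he (by simp [hx, hy])
  let f : G.induce (π ⁻¹' {π u}) →g G.deleteEdges {e} :=
    ⟨Subtype.val, fun hxy => deleteEdges_adj.2 ⟨hxy, hfiber _ _⟩⟩
  exact ((hblocks (π u)).preconnected ⟨u, rfl⟩ ⟨v, h.symm⟩).map f

lemma quotientGraph_deleteEdges_le (e : Sym2 V) :
    (G.quotientGraph π).deleteEdges {Sym2.map π e} ≤ (G.deleteEdges {e}).quotientGraph π := by
  intro a c h
  obtain ⟨hadj, hne⟩ := deleteEdges_adj.1 h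
  obtain ⟨hac, x, y, hxy, rfl, rfl⟩ := quotientGraph_adj.1 hadj
  refine quotientGraph_adj.2 ⟨hac, x, y, deleteEdges_adj.2 ⟨hxy, ?_⟩, rfl, rfl⟩
  rintro rfl
  exact hne rfl

lemma IsBridge.map_quotientGraph (hblocks : ∀ a, (G.induce (π ⁻¹' {a})).Connected)
    {e : Sym2 V} (he : ¬ (Sym2.map π e).IsDiag) (hb : G.IsBridge e) :
    (G.quotientGraph π).IsBridge (Sym2.map π e) := by
  induction e using Sym2.ind with | _ u v =>
  have hle := quotientGraph_deleteEdges_le (G := G) (π := π) s(u, v)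
  rw [Sym2.map_mk] at hle ⊢
  exact fun h => isBridge_iff.1 hb <| .of_quotientGraph
    (fun _ _ => reachable_deleteEdges_of_map_eq hblocks he) (h.mono hle)

lemma isAcyclic_quotientGraph (hblocks : ∀ a, (G.induce (π ⁻¹' {a})).Connected)
    (hbr : ∀ e ∈ G.crossEdgeSet π, G.IsBridge e) : (G.quotientGraph π).IsAcyclic := by
  rw [isAcyclic_iff_forall_isBridge, ← image_map_crossEdgeSet]
  rintro _ ⟨e, he, rfl⟩
  exact (hbr e he).map_quotientGraph hblocks he.2

lemma injOn_map_crossEdgeSet (hblocks : ∀ a, (G.induce (π ⁻¹' {a})).Connected)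
    (hbr : ∀ e ∈ G.crossEdgeSet π, G.IsBridge e) :
    Set.InjOn (Sym2.map π) (G.crossEdgeSet π) := by
  intro e₁ he₁ e₂ he₂ heq
  by_contra hne
  induction e₁ using Sym2.ind with | _ u v =>
  have he₂' : e₂ ∈ (G.deleteEdges {s(u, v)}).crossEdgeSet π := by
    rw [crossEdgeSet_deleteEdges]
    exact ⟨he₂, Ne.symm hne⟩
  have hadj := map_mem_edgeSet_quotientGraph he₂'
  rw [← heq, Sym2.map_mk, mem_edgeSet] at hadj
  exact isBridge_iff.1 (hbr _ he₁) <| .of_quotientGraph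
    (fun _ _ => reachable_deleteEdges_of_map_eq hblocks he₁.2) hadj.reachable

lemma ncard_crossEdgeSet_of_forall_isBridge [Finite V] (hG : G.Connected) (hπ : Surjective π)
    (hblocks : ∀ a, (G.induce (π ⁻¹' {a})).Connected)
    (hbr : ∀ e ∈ G.crossEdgeSet π, G.IsBridge e) :
    (G.crossEdgeSet π).ncard = Nat.card ι - 1 := by
  have := Finite.of_surjective π hπ
  have htree : (G.quotientGraph π).IsTree :=
    ⟨hG.quotientGraph hπ, isAcyclic_quotientGraph hblocks hbr⟩
  have hcard := (isTree_iff_connected_and_card.1 htree).2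
  rw [← (injOn_map_crossEdgeSet hblocks hbr).ncard_image, image_map_crossEdgeSet,
    ← Nat.card_coe_set_eq]
  omega

lemma forall_isBridge_of_ncard_crossEdgeSet_le [Finite V] (hG : G.Connected)
    (hπ : Surjective π) (h : (G.crossEdgeSet π).ncard ≤ Nat.card ι - 1) :
    ∀ e ∈ G.crossEdgeSet π, G.IsBridge e := by
  have := Finite.of_surjective π hπ
  intro e he
  induction e using Sym2.ind with | _ u v =>
  by_contra hnb
  have hlb := card_sub_one_le_ncard_crossEdgeSet (hG.connected_delete_edge_of_not_isBridge hnb) hπ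
  rw [crossEdgeSet_deleteEdges, Set.ncard_sdiff_singleton_of_mem he] at hlb
  have hι : 1 < Nat.card ι :=
    Finite.one_lt_card_iff_nontrivial.2 ⟨π u, π v, by simpa using he.2⟩
  omega

lemma forall_reachable_imp_eq_iff {α : Type*} (H : SimpleGraph V) (f : V → α) :
    (∀ u v, H.Reachable u v → f u = f v) ↔ ∀ u v, H.Adj u v → f u = f v := by
  refine ⟨fun h u v huv => h u v huv.reachable, fun h u v huv => ?_⟩
  obtain ⟨p⟩ := huv
  induction p with
  | nil => rfl
  | cons hxy _ ih => exact (h _ _ hxy).trans ih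

lemma forall_reachable_deleteEdges_isBridge_imp_eq_iff :
    (∀ u v, (G.deleteEdges {e | G.IsBridge e}).Reachable u v → π u = π v) ↔
      ∀ e ∈ G.crossEdgeSet π, G.IsBridge e := by
  simp only [forall_reachable_imp_eq_iff, deleteEdges_adj, Set.mem_ofPred_eq, crossEdgeSet,
    Sym2.forall, mem_edgeSet, Sym2.map_mk, Sym2.mk_isDiag_iff, and_imp]
  exact forall₂_congr fun _ _ => forall_congr' fun _ => not_imp_comm

lemma ncard_crossEdgeSet [Fintype G.edgeSet] [DecidableEq ι] :
    (G.crossEdgeSet π).ncard =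
      (G.edgeFinset.filter fun e => ¬ (Sym2.map π e).IsDiag).card := by
  rw [← Set.ncard_coe_finset, Finset.coe_filter]
  simp only [mem_edgeFinset]
  rfl

end SimpleGraph

open SimpleGraph

/-- Let `G` be a connected graph and `π : V → ι` a partition of its vertices
whose blocks (the fibers of `π`) induce connected subgraphs. Then the
bridge-block decomposition of `G` is finer than the partition (i.e. vertices in
the same bridge-block lie in the same block of the partition) if and only if
the reduced multigraph is a tree, i.e. the quotient graph is connected and the
number of cross-edges of `G` equals the number of blocks minus one. -/
theorem bridgeBlock_finer_iff_reduced_tree {V ι : Type*} [Fintype V] [Fintype ι]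
    [DecidableEq ι] (G : SimpleGraph V) [DecidableRel G.Adj] (hG : G.Connected)
    (π : V → ι) (hπ : Function.Surjective π)
    (hblocks : ∀ a : ι, (G.induce (π ⁻¹' {a})).Connected) :
    (∀ u v : V, (G.deleteEdges {e | G.IsBridge e}).Reachable u v → π u = π v) ↔
      ((SimpleGraph.fromRel fun a c => ∃ u v, G.Adj u v ∧ π u = a ∧ π v = c).Connected ∧
        (G.edgeFinset.filter fun e => ¬ (Sym2.map π e).IsDiag).card =
          Fintype.card ι - 1) := by
  rw [forall_reachable_deleteEdges_isBridge_imp_eq_iff, ← ncard_crossEdgeSet,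
    Fintype.card_eq_nat_card]
  exact ⟨fun hbr =>
      ⟨hG.quotientGraph hπ, ncard_crossEdgeSet_of_forall_isBridge hG hπ hblocks hbr⟩,
    fun h => forall_isBridge_of_ncard_crossEdgeSet_le hG hπ h.2.le⟩
end

section
/- For any line ℓ = (i, j) of a connected weighted graph G, the diagonal PTDF satisfies D_{ℓℓ} = b_ℓ · (spanning-forest weight of T({i},{j})) / (total spanning-tree weight of G) = 1 − (Σ_{F ∈ T∖{ℓ}} β(F)) / (Σ_{F ∈ T} β(F)), where T∖{ℓ} is the set of spanning trees of G avoiding ℓ. In particular 0 < D_{ℓℓ} ≤ 1. -/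
open Finset
open scoped Classical

/-- The weight `β(F)` of a set of edges: the product of the edge weights. -/
noncomputable def edgeSetWeight {V : Type*} (w : Sym2 V → ℝ) (F : Finset (Sym2 V)) : ℝ :=
  ∏ e ∈ F, w e

/-- `F` is (the edge set of) a spanning tree of `G`: it consists of edges of `G`,
joins all vertices, and has `n - 1` edges. -/
def IsSpanningTreeOf {V : Type*} [Fintype V] (G : SimpleGraph V) (F : Finset (Sym2 V)) : Prop :=
  (F : Set (Sym2 V)) ⊆ G.edgeSet ∧ (SimpleGraph.fromEdgeSet (F : Set (Sym2 V))).Connected ∧ F.card = Fintype.card V - 1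

/-- `F` is (the edge set of) a spanning forest of `G` consisting of exactly two
trees, one containing `i` and the other containing `j`. -/
def IsTwoForestSep {V : Type*} [Fintype V] (G : SimpleGraph V) (i j : V)
    (F : Finset (Sym2 V)) : Prop :=
  (F : Set (Sym2 V)) ⊆ G.edgeSet ∧ ¬ (SimpleGraph.fromEdgeSet (F : Set (Sym2 V))).Reachable i j ∧
    (∀ u, (SimpleGraph.fromEdgeSet (F : Set (Sym2 V))).Reachable u i ∨
      (SimpleGraph.fromEdgeSet (F : Set (Sym2 V))).Reachable u j) ∧
    F.card = Fintype.card V - 2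

/-! Deleting the line `ℓ = s(i, j)` from a spanning tree through it leaves a spanning two-forest
separating `i` from `j` (every edge of a tree is a bridge), and adding `ℓ` back to such a forest
gives a spanning tree again; this bijection multiplies weights by `b_ℓ`. Splitting the spanning
trees by whether they use `ℓ` therefore gives `β(T) = b_ℓ β(T({i},{j})) + β(T∖{ℓ})`, and the
formula follows. Strict positivity holds because some spanning tree of the connected graph
passes through `ℓ`. -/

section SpanningTrees

open SimpleGraph

variable {V : Type*}

lemma SimpleGraph.Reachable.deleteEdges_left_or_right {H : SimpleGraph V} {i j u : V}
    (hij : i ≠ j) (h : H.Reachable u i) :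
    (H.deleteEdges {s(i, j)}).Reachable u i ∨ (H.deleteEdges {s(i, j)}).Reachable u j := by
  classical
  obtain ⟨P, hP⟩ := h.exists_isPath
  by_cases hℓ : s(i, j) ∈ P.edges
  · -- the part of `P` before it first meets `j` avoids `i`, hence the edge `s(i, j)`
    have hj := P.snd_mem_support_of_mem_edges hℓ
    have hi := Walk.endpoint_notMem_support_takeUntil hP hj hij
    exact .inr <| reachable_deleteEdges_iff_exists_walk.mpr
      ⟨P.takeUntil j hj, fun h ↦ hi ((P.takeUntil j hj).fst_mem_support_of_mem_edges h)⟩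
  · exact .inl <| reachable_deleteEdges_iff_exists_walk.mpr ⟨P, hℓ⟩

lemma SimpleGraph.edgeSet_fromEdgeSet_of_subset {G : SimpleGraph V} {s : Set (Sym2 V)}
    (hs : s ⊆ G.edgeSet) : (fromEdgeSet s).edgeSet = s := by
  rw [edgeSet_fromEdgeSet, _root_.sdiff_eq_self_iff_disjoint, Set.disjoint_left]
  exact fun e hd he ↦ G.not_isDiag_of_mem_edgeSet (hs he) hd

lemma edgeSetWeight_pos_of_subset {G : SimpleGraph V} {F : Finset (Sym2 V)} {w : Sym2 V → ℝ}
    (hF : (F : Set (Sym2 V)) ⊆ G.edgeSet) (hw : ∀ e ∈ G.edgeSet, 0 < w e) :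
    0 < edgeSetWeight w F :=
  Finset.prod_pos fun e he ↦ hw e (hF he)

variable [Fintype V] {G : SimpleGraph V} {F : Finset (Sym2 V)} {i j : V}

lemma SimpleGraph.Connected.exists_isSpanningTreeOf_mem (hG : G.Connected) {e : Sym2 V}
    (he : e ∈ G.edgeSet) : ∃ F, IsSpanningTreeOf G F ∧ e ∈ F := by
  classical
  induction e with | h u v =>
  have huv : u ≠ v := G.ne_of_adj he
  have hedge : (edge u v).IsAcyclic := by
    simpa using isAcyclic_bot.sup_edge_of_not_reachable (by simpa [reachable_bot] using huv)
  obtain ⟨T, huvT, hTG, hT⟩ := hG.exists_isTree_le_of_le_of_isAcyclic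
    (G.edge_le_iff.mpr (.inr he)) hedge
  refine ⟨T.edgeFinset, ⟨?_, ?_, ?_⟩, ?_⟩
  · simpa using edgeSet_mono hTG
  · simpa using hT.connected
  · have := hT.card_edgeFinset
    omega
  · simpa using huvT ((edge_adj u v u v).mpr ⟨.inl ⟨rfl, rfl⟩, huv⟩)

lemma IsSpanningTreeOf.isTree (hF : IsSpanningTreeOf G F) :
    (fromEdgeSet (F : Set (Sym2 V))).IsTree := by
  obtain ⟨hsub, hconn, hcard⟩ := hF
  have := hconn.nonempty
  refine isTree_iff_connected_and_card.mpr ⟨hconn, ?_⟩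
  rw [edgeSet_fromEdgeSet_of_subset hsub, Nat.card_coe_set_eq, Set.ncard_coe_finset, hcard,
    Nat.card_eq_fintype_card]
  have := Fintype.card_pos (α := V)
  omega

lemma IsTwoForestSep.notMem (hF : IsTwoForestSep G i j F) : s(i, j) ∉ F := fun h ↦
  hF.2.1 (Adj.reachable (by
    simpa [fromEdgeSet_adj] using ⟨h, fun hij : i = j ↦ hF.2.1 (hij ▸ Reachable.refl _)⟩))

variable [DecidableEq V]

lemma IsTwoForestSep.isSpanningTreeOf_insert (hF : IsTwoForestSep G i j F)
    (hij : s(i, j) ∈ G.edgeSet) : IsSpanningTreeOf G (insert s(i, j) F) := by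
  have hℓ := hF.notMem
  obtain ⟨hsub, -, hcover, hcard⟩ := hF
  have hne : i ≠ j := G.ne_of_adj hij
  have hn : 2 ≤ Fintype.card V := Fintype.one_lt_card_iff_nontrivial.mpr ⟨i, j, hne⟩
  set T := fromEdgeSet ((insert s(i, j) F : Finset (Sym2 V)) : Set (Sym2 V))
  have hle : fromEdgeSet (F : Set (Sym2 V)) ≤ T := fromEdgeSet_mono (by simp)
  have hTij : T.Adj i j := by simpa [T, fromEdgeSet_adj] using hne
  have hreach (u : V) : T.Reachable u i :=
    (hcover u).elim (·.mono hle) fun h ↦ (h.mono hle).trans hTij.symm.reachable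
  refine ⟨by simpa [Set.insert_subset_iff] using ⟨hij, hsub⟩,
    (connected_iff_exists_forall_reachable T).mpr ⟨i, fun u ↦ (hreach u).symm⟩, ?_⟩
  rw [Finset.card_insert_of_notMem hℓ, hcard]
  omega

lemma IsSpanningTreeOf.isTwoForestSep_erase (hF : IsSpanningTreeOf G F) (hℓ : s(i, j) ∈ F) :
    IsTwoForestSep G i j (F.erase s(i, j)) := by
  have hsub := hF.1
  have hne : i ≠ j := G.ne_of_adj (hsub hℓ)
  have hdel : fromEdgeSet ((F.erase s(i, j) : Finset (Sym2 V)) : Set (Sym2 V)) =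
      (fromEdgeSet (F : Set (Sym2 V))).deleteEdges {s(i, j)} := by
    rw [Finset.coe_erase, fromEdgeSet_sdiff]; rfl
  have hbridge : (fromEdgeSet (F : Set (Sym2 V))).IsBridge s(i, j) :=
    isAcyclic_iff_forall_isBridge.mp hF.isTree.isAcyclic
      (by simpa [fromEdgeSet_adj] using ⟨hℓ, hne⟩)
  refine ⟨fun e he ↦ hsub (Finset.mem_of_mem_erase he), hdel ▸ hbridge,
    fun u ↦ hdel ▸ ?_, ?_⟩
  · exact (hF.2.1.preconnected u i).deleteEdges_left_or_right hne
  · rw [Finset.card_erase_of_mem hℓ, hF.2.2]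
    omega

lemma sum_isSpanningTreeOf_mem_eq_mul_sum_isTwoForestSep (w : Sym2 V → ℝ)
    (hij : s(i, j) ∈ G.edgeSet) :
    ∑ F ∈ univ.filter (fun F ↦ IsSpanningTreeOf G F ∧ s(i, j) ∈ F), edgeSetWeight w F =
      w s(i, j) * ∑ F ∈ univ.filter (IsTwoForestSep G i j), edgeSetWeight w F := by
  rw [Finset.mul_sum]
  refine Finset.sum_nbij' (·.erase s(i, j)) (insert s(i, j)) ?_ ?_ ?_ ?_ ?_
  · intro F hF
    simp only [Finset.mem_filter, Finset.mem_univ, true_and] at hF ⊢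
    exact hF.1.isTwoForestSep_erase hF.2
  · intro F hF
    simp only [Finset.mem_filter, Finset.mem_univ, true_and] at hF ⊢
    exact ⟨hF.isSpanningTreeOf_insert hij, Finset.mem_insert_self _ _⟩
  · intro F hF
    exact Finset.insert_erase (Finset.mem_filter.mp hF).2.2
  · intro F hF
    exact Finset.erase_insert (Finset.mem_filter.mp hF).2.notMem
  · intro F hF
    exact (Finset.mul_prod_erase F w (Finset.mem_filter.mp hF).2.2).symm

lemma sum_isSpanningTreeOf_eq (w : Sym2 V → ℝ) (hij : s(i, j) ∈ G.edgeSet) :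
    ∑ F ∈ univ.filter (IsSpanningTreeOf G), edgeSetWeight w F =
      w s(i, j) * ∑ F ∈ univ.filter (IsTwoForestSep G i j), edgeSetWeight w F +
        ∑ F ∈ univ.filter (fun F ↦ IsSpanningTreeOf G F ∧ s(i, j) ∉ F), edgeSetWeight w F := by
  rw [← sum_isSpanningTreeOf_mem_eq_mul_sum_isTwoForestSep w hij,
    ← Finset.sum_filter_add_sum_filter_not _ (s(i, j) ∈ ·), Finset.filter_filter,
    Finset.filter_filter]

end SpanningTrees

/-- Spanning-tree expression for the diagonal PTDF of a line `ℓ = (i,j)`: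
`D_ℓℓ = b_ℓ · β(T({i},{j}))/β(T) = 1 - β(T∖{ℓ})/β(T)`, and `0 < D_ℓℓ ≤ 1`. -/
theorem diagonal_PTDF_spanning_tree_formula {V : Type*} [Fintype V] [DecidableEq V]
    (G : SimpleGraph V) (hG : G.Connected)
    (w : Sym2 V → ℝ) (hw : ∀ e ∈ G.edgeSet, 0 < w e)
    (i j : V) (hij : s(i, j) ∈ G.edgeSet)
    (Tsum D : ℝ)
    (hTsum : Tsum = ∑ F ∈ Finset.univ.filter (IsSpanningTreeOf G), edgeSetWeight w F)
    (hD : D = w s(i, j) *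
      (∑ F ∈ Finset.univ.filter (IsTwoForestSep G i j), edgeSetWeight w F) / Tsum) :
    D = 1 - (∑ F ∈ Finset.univ.filter
        (fun F => IsSpanningTreeOf G F ∧ s(i, j) ∉ F), edgeSetWeight w F) / Tsum ∧
      0 < D ∧ D ≤ 1 := by
  set A := w s(i, j) * ∑ F ∈ univ.filter (IsTwoForestSep G i j), edgeSetWeight w F
  set B := ∑ F ∈ univ.filter (fun F ↦ IsSpanningTreeOf G F ∧ s(i, j) ∉ F), edgeSetWeight w F
  have hTsum' : Tsum = A + B := hTsum.trans (sum_isSpanningTreeOf_eq w hij)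
  have hA : 0 < A := by
    obtain ⟨F₀, hF₀, hℓF₀⟩ := hG.exists_isSpanningTreeOf_mem hij
    have hsum : 0 < ∑ F ∈ univ.filter (fun F ↦ IsSpanningTreeOf G F ∧ s(i, j) ∈ F),
        edgeSetWeight w F :=
      Finset.sum_pos (fun F hF ↦ edgeSetWeight_pos_of_subset (Finset.mem_filter.mp hF).2.1.1 hw)
        ⟨F₀, Finset.mem_filter.mpr ⟨Finset.mem_univ _, hF₀, hℓF₀⟩⟩
    exact hsum.trans_eq (sum_isSpanningTreeOf_mem_eq_mul_sum_isTwoForestSep w hij)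
  have hB : 0 ≤ B := Finset.sum_nonneg fun F hF ↦
    (edgeSetWeight_pos_of_subset (Finset.mem_filter.mp hF).2.1.1 hw).le
  subst hD hTsum'
  refine ⟨by field_simp; ring, by positivity, (div_le_one (by positivity)).mpr (by linarith)⟩
end
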